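/- arXiv:2303.14252 — 2 statements merged into one kernel-verified Lean document; each statement's English description precedes it below -/
import Mathlib

section
/- Let κ be an infinite cardinal, α an ordinal, and let ⟨𝓕_{β,η} : (β,η) ∈ α × κ⟩ be a stratified set of filters on κ. Then there is a stratified set of ultrafilters ⟨u_{β,η} : (β,η) ∈ α × κ⟩ on κ (i.e., a matrix of ultrafilters satisfying the two conditions of a stratified set of filters) such that 𝓕_{β,η} ⊆ u_{β,η} for all (β,η) ∈ α × κ. -/
open Cardinal Set

universe u

/-- A stratified set of filters on `κ` (indexed by pairs `(β, η) ∈ α × κ`): a matrix of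
proper filters such that (i) there is a choice of sets `c β η ∈ F β η` with each row
`⟨c β η : η < κ⟩` pairwise disjoint, and (ii) whenever `β < δ < α`, `η < κ` and
`G ∈ F β η`, the set `{ζ < κ : G ∈ F δ ζ}` has cardinality `κ`. -/
def IsStratified {K : Type u} (α : Ordinal.{u}) (F : Ordinal.{u} → K → Filter K) : Prop :=
  (∀ β < α, ∀ η : K, (F β η).NeBot) ∧
  (∃ c : Ordinal.{u} → K → Set K,
      (∀ β < α, ∀ η : K, c β η ∈ F β η) ∧
      (∀ β < α, ∀ η ζ : K, η ≠ ζ → Disjoint (c β η) (c β ζ))) ∧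
  (∀ β δ : Ordinal.{u}, β < δ → δ < α → ∀ η : K, ∀ G ∈ F β η,
      #{ζ : K | G ∈ F δ ζ} = #K)

namespace StratifiedAux

variable {K : Type u}

lemma card_eq_of_subset {A B : Set K} (h : A ⊆ B) (hA : #A = #K) : #B = #K :=
  le_antisymm (mk_set_le B) (hA ▸ Cardinal.mk_le_mk_of_subset h)

lemma card_inter_of_diff_lt (hK : ℵ₀ ≤ #K) {A S : Set K} (hA : #A = #K)
    (h : #(A \ S : Set K) < #K) : #(A ∩ S : Set K) = #K := by
  by_contra hne
  have h2 : #(A ∩ S : Set K) < #K := (mk_set_le _).lt_of_ne hne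
  have h3 : #A ≤ #(A \ S : Set K) + #(A ∩ S : Set K) := by
    calc #A = #((A \ S) ∪ (A ∩ S) : Set K) := by rw [Set.diff_union_inter]
    _ ≤ _ := Cardinal.mk_union_le _ _
  rw [hA] at h3
  exact absurd h3 (not_le.2 (Cardinal.add_lt_of_lt hK h h2))

lemma nonempty_of_card_eq (hK : ℵ₀ ≤ #K) {A : Set K} (hA : #A = #K) : A.Nonempty := by
  rw [← Set.nonempty_coe_sort, ← Cardinal.mk_ne_zero_iff, hA]
  exact (aleph0_pos.trans_le hK).ne'

/-- `Good α M G δ ζ` says that the entry `(δ, ζ)` of the matrix `M` can coherently be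
assigned the set `Gᶜ`: either `Gᶜ` already belongs to the filter, or the entry is free
(neither `G` nor `Gᶜ` belongs) and there is a witness `B ∈ M δ ζ` and a higher level
`δ'` such that all but `< #K` of the columns of level `δ'` whose filters contain `B`
are themselves `Good`. -/
inductive Good (α : Ordinal.{u}) (M : Ordinal.{u} → K → Filter K) (G : Set K) :
    Ordinal.{u} → K → Prop
  | forced {δ : Ordinal.{u}} {ζ : K} (h : Gᶜ ∈ M δ ζ) : Good α M G δ ζ
  | free {δ : Ordinal.{u}} {ζ : K} (hδα : δ < α) (hG : G ∉ M δ ζ) (hGc : Gᶜ ∉ M δ ζ)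
      {B : Set K} (hB : B ∈ M δ ζ) {δ' : Ordinal.{u}} (hδ : δ < δ') (hδ' : δ' < α)
      (S : Set K) (hS : #({ζ' : K | B ∈ M δ' ζ'} \ S : Set K) < #K)
      (hSg : ∀ ζ' ∈ S, Good α M G δ' ζ') : Good α M G δ ζ

variable {α : Ordinal.{u}} {M : Ordinal.{u} → K → Filter K} {G : Set K}

lemma good_not_mem (ne : ∀ β < α, ∀ η, (M β η).NeBot) {δ : Ordinal.{u}} {ζ : K}
    (hδ : δ < α) (h : Good α M G δ ζ) : G ∉ M δ ζ := by
  cases h with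
  | forced h' =>
    intro hG
    have hmem : (∅ : Set K) ∈ M δ ζ := by
      simpa [Set.inter_compl_self] using Filter.inter_mem hG h'
    exact (ne δ hδ ζ).ne (Filter.empty_mem_iff_bot.mp hmem)
  | free hδα hG hGc hB hδδ' hδ'α S hS hSg => exact hG

lemma good_trace (hK : ℵ₀ ≤ #K) (ne : ∀ β < α, ∀ η, (M β η).NeBot)
    (strat : ∀ β δ : Ordinal.{u}, β < δ → δ < α → ∀ η : K, ∀ s ∈ M β η,
      #{ζ : K | s ∈ M δ ζ} = #K)
    {δ₁ : Ordinal.{u}} {ζ₁ : K} (h : Good α M G δ₁ ζ₁) :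
    ∀ B ∈ M δ₁ ζ₁, ∀ δ₂, δ₁ < δ₂ → δ₂ < α →
      #{ζ : K | B ∈ M δ₂ ζ ∧ Good α M G δ₂ ζ} = #K := by
  induction h with
  | @forced δ ζ h' =>
    intro B hB δ₂ h12 h2
    have hN : #{ζ' : K | B ∩ Gᶜ ∈ M δ₂ ζ'} = #K :=
      strat δ δ₂ h12 h2 ζ _ (Filter.inter_mem hB h')
    refine card_eq_of_subset (fun ζ' hζ' => ?_) hN
    exact ⟨Filter.mem_of_superset hζ' Set.inter_subset_left,
      Good.forced (Filter.mem_of_superset hζ' Set.inter_subset_right)⟩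
  | @free δ ζ hδα hG hGc B₀ hB₀ δ' hδδ' hδ'α S hS hSg ih =>
    intro B hB δ₂ h12 h2
    have hBB₀ : B ∩ B₀ ∈ M δ ζ := Filter.inter_mem hB hB₀
    have keyS : ∀ {A : Set K}, #A = #K → A ⊆ {ζ' : K | B₀ ∈ M δ' ζ'} →
        #(A ∩ S : Set K) = #K := by
      intro A hA hsub
      refine card_inter_of_diff_lt hK hA (lt_of_le_of_lt ?_ hS)
      exact Cardinal.mk_le_mk_of_subset (fun x hx => ⟨hsub hx.1, hx.2⟩)
    rcases lt_trichotomy δ₂ δ' with hlt | heq | hgt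
    · -- δ₂ < δ' : every column of level δ₂ containing B ∩ B₀ is Good
      have hN₂ : #{ζ' : K | B ∩ B₀ ∈ M δ₂ ζ'} = #K := strat δ δ₂ h12 h2 ζ _ hBB₀
      refine card_eq_of_subset (fun ζ' hζ' => ?_) hN₂
      have hBmem : B ∈ M δ₂ ζ' := Filter.mem_of_superset hζ' Set.inter_subset_left
      have hB₀mem : B₀ ∈ M δ₂ ζ' :=
        Filter.mem_of_superset hζ' (Set.inter_subset_right)
      refine ⟨hBmem, ?_⟩
      by_cases hc : Gᶜ ∈ M δ₂ ζ'
      · exact Good.forced hc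
      by_cases hg : G ∈ M δ₂ ζ'
      · exfalso
        have hA : #{ξ : K | G ∩ (B ∩ B₀) ∈ M δ' ξ} = #K :=
          strat δ₂ δ' hlt hδ'α ζ' _ (Filter.inter_mem hg hζ')
        have hsub : {ξ : K | G ∩ (B ∩ B₀) ∈ M δ' ξ} ⊆ {ξ : K | B₀ ∈ M δ' ξ} :=
          fun ξ hξ => Filter.mem_of_superset hξ
            (Set.inter_subset_right.trans Set.inter_subset_right)
        obtain ⟨ξ, hξA, hξS⟩ := nonempty_of_card_eq hK (keyS hA hsub)
        have hGξ : G ∈ M δ' ξ := Filter.mem_of_superset hξA Set.inter_subset_left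
        exact good_not_mem ne hδ'α (hSg ξ hξS) hGξ
      · exact Good.free h2 hg hc hB₀mem hlt hδ'α S hS hSg
    · -- δ₂ = δ'
      subst heq
      have hN : #{ζ' : K | B ∩ B₀ ∈ M δ₂ ζ'} = #K := strat δ δ₂ hδδ' hδ'α ζ _ hBB₀
      have hNS := keyS hN (fun ζ' hζ' => Filter.mem_of_superset hζ' Set.inter_subset_right)
      refine card_eq_of_subset (fun ζ' hζ' => ?_) hNS
      exact ⟨Filter.mem_of_superset hζ'.1 Set.inter_subset_left, hSg ζ' hζ'.2⟩
    · -- δ' < δ₂ : go through a Good column at level δ'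
      have hN : #{ζ' : K | B ∩ B₀ ∈ M δ' ζ'} = #K := strat δ δ' hδδ' hδ'α ζ _ hBB₀
      have hNS := keyS hN (fun ζ' hζ' => Filter.mem_of_superset hζ' Set.inter_subset_right)
      obtain ⟨ξ, hξN, hξS⟩ := nonempty_of_card_eq hK hNS
      have hT : #{ζ' : K | B ∩ B₀ ∈ M δ₂ ζ' ∧ Good α M G δ₂ ζ'} = #K :=
        ih ξ hξS _ hξN δ₂ hgt h2
      refine card_eq_of_subset (fun ζ' hζ' => ?_) hT
      exact ⟨Filter.mem_of_superset hζ'.1 Set.inter_subset_left, hζ'.2⟩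

/-- The one-step lemma: any stratified matrix of filters can be extended (pointwise) to a
stratified matrix which decides the set `G` at every entry of level `< α`. -/
lemma step (hK : ℵ₀ ≤ #K) (ne : ∀ β < α, ∀ η, (M β η).NeBot)
    (strat : ∀ β δ : Ordinal.{u}, β < δ → δ < α → ∀ η : K, ∀ s ∈ M β η,
      #{ζ : K | s ∈ M δ ζ} = #K) (G : Set K) :
    ∃ M' : Ordinal.{u} → K → Filter K,
      (∀ β η, ∀ s ∈ M β η, s ∈ M' β η) ∧
      (∀ β < α, ∀ η, (M' β η).NeBot) ∧
      (∀ β δ : Ordinal.{u}, β < δ → δ < α → ∀ η : K, ∀ s ∈ M' β η,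
        #{ζ : K | s ∈ M' δ ζ} = #K) ∧
      (∀ β < α, ∀ η, G ∈ M' β η ∨ Gᶜ ∈ M' β η) := by
  classical
  set W : Ordinal.{u} → K → Set K := fun β η => if Good α M G β η then Gᶜ else G with hW
  set M' : Ordinal.{u} → K → Filter K :=
    fun β η => if β < α then M β η ⊓ Filter.principal (W β η) else M β η with hM'
  have hWc : ∀ β < α, ∀ η, (W β η)ᶜ ∉ M β η := by
    intro β hβ η
    by_cases hg : Good α M G β η
    · simp only [hW, if_pos hg, compl_compl]
      exact good_not_mem ne hβ hg
    · simp only [hW, if_neg hg]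
      exact fun hc => hg (Good.forced hc)
  have hext : ∀ β η, ∀ s ∈ M β η, s ∈ M' β η := by
    intro β η s hs
    simp only [hM']
    split
    · exact Filter.mem_inf_of_left hs
    · exact hs
  have hWmem : ∀ β < α, ∀ η, W β η ∈ M' β η := by
    intro β hβ η
    simp only [hM', if_pos hβ]
    exact Filter.mem_inf_of_right (Filter.mem_principal_self _)
  refine ⟨M', hext, ?_, ?_, ?_⟩
  · intro β hβ η
    simp only [hM', if_pos hβ]
    rw [Filter.neBot_iff]
    intro hbot
    rw [Filter.inf_principal_eq_bot] at hbot
    exact hWc β hβ η hbot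
  · intro β δ hβδ hδα η s hs
    have hβα : β < α := hβδ.trans hδα
    rw [hM'] at hs
    simp only [if_pos hβα] at hs
    rw [Filter.mem_inf_principal] at hs
    set B : Set K := {x | x ∈ W β η → x ∈ s} with hB
    have hBmem : B ∈ M β η := hs
    have hsub : W β η ∩ B ⊆ s := fun x hx => hx.2 hx.1
    by_cases hg : Good α M G β η
    · have hT : #{ζ : K | B ∈ M δ ζ ∧ Good α M G δ ζ} = #K :=
        good_trace hK ne strat hg B hBmem δ hβδ hδα
      refine card_eq_of_subset (fun ζ hζ => ?_) hT
      show s ∈ M' δ ζ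
      have hWδ : W δ ζ = Gᶜ := by simp only [hW, if_pos hζ.2]
      have : W β η ∩ B ∈ M δ ζ ⊓ Filter.principal (W δ ζ) := by
        rw [hWδ]
        have : B ∩ Gᶜ ∈ M δ ζ ⊓ Filter.principal Gᶜ :=
          Filter.inter_mem_inf hζ.1 (Filter.mem_principal_self _)
        have hWβ : W β η = Gᶜ := by simp only [hW, if_pos hg]
        rw [hWβ, Set.inter_comm]
        exact this
      simp only [hM', if_pos hδα]
      exact Filter.mem_of_superset this hsub
    · -- W β η = G
      have hWβ : W β η = G := by simp only [hW, if_neg hg]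
      have hT : #{ζ : K | B ∈ M δ ζ ∧ ¬ Good α M G δ ζ} = #K := by
        have hN : #{ζ : K | B ∈ M δ ζ} = #K := strat β δ hβδ hδα η B hBmem
        by_contra hne
        have hTlt : #{ζ : K | B ∈ M δ ζ ∧ ¬ Good α M G δ ζ} < #K :=
          (mk_set_le _).lt_of_ne hne
        by_cases hGmem : G ∈ M β η
        · have hN' : #{ζ : K | G ∩ B ∈ M δ ζ} = #K :=
            strat β δ hβδ hδα η _ (Filter.inter_mem hGmem hBmem)
          have : #{ζ : K | G ∩ B ∈ M δ ζ} ≤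
              #{ζ : K | B ∈ M δ ζ ∧ ¬ Good α M G δ ζ} := by
            refine Cardinal.mk_le_mk_of_subset (fun ζ hζ => ?_)
            have hGζ : G ∈ M δ ζ := Filter.mem_of_superset hζ Set.inter_subset_left
            exact ⟨Filter.mem_of_superset hζ Set.inter_subset_right,
              fun hgood => good_not_mem ne hδα hgood hGζ⟩
          rw [hN'] at this
          exact absurd (this.trans_lt hTlt) (lt_irrefl _)
        · have hGc : Gᶜ ∉ M β η := fun hc => hg (Good.forced hc)
          refine hg (Good.free hβα hGmem hGc hBmem hβδ hδα
            {ζ : K | B ∈ M δ ζ ∧ Good α M G δ ζ} ?_ (fun ζ hζ => hζ.2))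
          refine lt_of_le_of_lt (Cardinal.mk_le_mk_of_subset ?_) hTlt
          intro ζ hζ
          exact ⟨hζ.1, fun hgood => hζ.2 ⟨hζ.1, hgood⟩⟩
      refine card_eq_of_subset (fun ζ hζ => ?_) hT
      show s ∈ M' δ ζ
      have hWδ : W δ ζ = G := by simp only [hW, if_neg hζ.2]
      have hmem : W β η ∩ B ∈ M δ ζ ⊓ Filter.principal (W δ ζ) := by
        rw [hWδ, hWβ, Set.inter_comm]
        exact Filter.inter_mem_inf hζ.1 (Filter.mem_principal_self _)
      simp only [hM', if_pos hδα]
      exact Filter.mem_of_superset hmem hsub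
  · intro β hβ η
    by_cases hg : Good α M G β η
    · right
      have := hWmem β hβ η
      rwa [show W β η = Gᶜ by simp only [hW, if_pos hg]] at this
    · left
      have := hWmem β hβ η
      rwa [show W β η = G by simp only [hW, if_neg hg]] at this

end StratifiedAux

open StratifiedAux in
/-- Given a stratified set of filters `F` on `κ`, there is a stratified set of
ultrafilters `u` on `κ` such that `F β η ⊆ u β η` for all `(β, η) ∈ α × κ`. -/
theorem stratified_filters_to_stratified_ultrafilters {K : Type u} (hK : aleph0 ≤ #K)
    (α : Ordinal.{u}) (F : Ordinal.{u} → K → Filter K) (hF : IsStratified α F) :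
    ∃ u : Ordinal.{u} → K → Ultrafilter K,
      IsStratified α (fun β η => (u β η : Filter K)) ∧
      ∀ β < α, ∀ η : K, ∀ s ∈ F β η, s ∈ u β η := by
  classical
  obtain ⟨ne0, ⟨c, hc1, hc2⟩, strat0⟩ := hF
  -- the poset of "nice" extensions of F
  set Nice : (Ordinal.{u} → K → Filter K) → Prop := fun N =>
    (∀ β η, ∀ s ∈ F β η, s ∈ N β η) ∧
    (∀ β < α, ∀ η, (N β η).NeBot) ∧
    (∀ β δ : Ordinal.{u}, β < δ → δ < α → ∀ η : K, ∀ s ∈ N β η,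
      #{ζ : K | s ∈ N δ ζ} = #K) with hNice
  have hNiceF : Nice F := ⟨fun _ _ _ hs => hs, ne0, strat0⟩
  set T := {N : Ordinal.{u} → K → Filter K // Nice N} with hT
  set r : T → T → Prop := fun a b => ∀ β η, ∀ s ∈ a.1 β η, s ∈ b.1 β η with hr
  have hchains : ∀ ch : Set T, IsChain r ch → ∃ ub, ∀ a ∈ ch, r a ub := by
    intro ch hch
    rcases ch.eq_empty_or_nonempty with hemp | hne
    · exact ⟨⟨F, hNiceF⟩, fun a ha => absurd ha (by simp [hemp])⟩
    · haveI : Nonempty ch := hne.to_subtype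
      have hdirglob : ∀ x y : ch, ∃ z : ch, r x.1 z.1 ∧ r y.1 z.1 := by
        intro x y
        by_cases hxy : x.1 = y.1
        · exact ⟨y, by rw [hxy]; exact fun _ _ _ hs => hs, fun _ _ _ hs => hs⟩
        · rcases hch x.2 y.2 hxy with h | h
          · exact ⟨y, h, fun _ _ _ hs => hs⟩
          · exact ⟨x, fun _ _ _ hs => hs, h⟩
      set ubf : Ordinal.{u} → K → Filter K := fun β η => ⨅ x : ch, x.1.1 β η with hubf
      have hdir : ∀ β η, Directed (· ≥ ·) (fun x : ch => x.1.1 β η) := by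
        intro β η x y
        obtain ⟨z, hxz, hyz⟩ := hdirglob x y
        exact ⟨z, fun s hs => hxz β η s hs, fun s hs => hyz β η s hs⟩
      have hmem : ∀ β η s, s ∈ ubf β η ↔ ∃ x : ch, s ∈ x.1.1 β η := by
        intro β η s
        exact Filter.mem_iInf_of_directed (hdir β η) s
      have hniceub : Nice ubf := by
        refine ⟨?_, ?_, ?_⟩
        · intro β η s hs
          obtain ⟨x⟩ := (inferInstance : Nonempty ch)
          exact (hmem β η s).2 ⟨x, x.1.2.1 β η s hs⟩
        · intro β hβ η
          rw [← Filter.forall_mem_nonempty_iff_neBot]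
          intro s hs
          obtain ⟨x, hx⟩ := (hmem β η s).1 hs
          haveI := x.1.2.2.1 β hβ η
          exact Filter.nonempty_of_mem hx
        · intro β δ hβδ hδα η s hs
          obtain ⟨x, hx⟩ := (hmem β η s).1 hs
          refine card_eq_of_subset (fun ζ hζ => ?_) (x.1.2.2.2 β δ hβδ hδα η s hx)
          exact (hmem δ ζ s).2 ⟨x, hζ⟩
      exact ⟨⟨ubf, hniceub⟩, fun a ha β η s hs => (hmem β η s).2 ⟨⟨a, ha⟩, hs⟩⟩
  obtain ⟨m, hm⟩ := exists_maximal_of_chains_bounded hchains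
    (fun hab hbc β η s hs => hbc β η s (hab β η s hs))
  -- the maximal element decides every set
  have hdec : ∀ G : Set K, ∀ β < α, ∀ η, G ∈ m.1 β η ∨ Gᶜ ∈ m.1 β η := by
    intro G β hβ η
    obtain ⟨M', hext, hne, hstrat, hdecide⟩ := step hK m.2.2.1 m.2.2.2 G
    have hnice : Nice M' := ⟨fun β η s hs => hext β η s (m.2.1 β η s hs), hne, hstrat⟩
    have hmax := hm ⟨M', hnice⟩ (fun β η s hs => hext β η s hs)
    rcases hdecide β hβ η with h | h
    · exact Or.inl (hmax β η _ h)
    · exact Or.inr (hmax β η _ h)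
  haveI : Nonempty K := Cardinal.mk_ne_zero_iff.mp (aleph0_pos.trans_le hK).ne'
  have hproper : ∀ β, β < α → ∀ η, ∀ s : Set K, sᶜ ∉ m.1 β η ↔ s ∈ m.1 β η := by
    intro β hβ η s
    constructor
    · intro h
      rcases hdec s β hβ η with h' | h'
      · exact h'
      · exact absurd h' h
    · intro hs hc
      have hmem : (∅ : Set K) ∈ m.1 β η := by
        simpa [Set.inter_compl_self] using Filter.inter_mem hs hc
      exact (m.2.2.1 β hβ η).ne (Filter.empty_mem_iff_bot.mp hmem)
  refine ⟨fun β η => if hβ : β < α then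
      Ultrafilter.ofComplNotMemIff (m.1 β η) (hproper β hβ η)
    else (pure (Classical.arbitrary K) : Ultrafilter K), ⟨?_, ⟨c, ?_, ?_⟩, ?_⟩, ?_⟩
  · intro β hβ η
    exact Ultrafilter.neBot _
  · intro β hβ η
    simp only [dif_pos hβ]
    exact m.2.1 β η _ (hc1 β hβ η)
  · exact hc2
  · intro β δ hβδ hδα η G hG
    have hβα : β < α := hβδ.trans hδα
    simp only [dif_pos hβα] at hG
    simp only [dif_pos hδα]
    exact m.2.2.2 β δ hβδ hδα η G hG
  · intro β hβ η s hs
    simp only [dif_pos hβ]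
    exact m.2.1 β η s hs
end

section
/- Let κ be an infinite cardinal, α an ordinal, let ⟨𝓕_{β,η} : (β,η) ∈ α × κ⟩ be a stratified set of filters on κ, let X ⊆ κ, let C = {(β,η) ∈ α × κ : X ∈ 𝓕_{β,η}}, and let cl(C) = C_{κ^+} be the closure of C. If (β,η) ∈ cl(C), then for every G ∈ 𝓕_{β,η} and every γ with β < γ < α, the set {ζ < κ : (γ,ζ) ∈ cl(C) and G ∈ 𝓕_{γ,ζ}} has cardinality κ. -/
open Cardinal Set

universe u

/-- The closure iteration: `C₀ = C`; `C_{ξ+1} = C_ξ ∪ {(β,η) : ∃ ε, β < ε < α and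
∃ G ∈ F β η with #{ζ < κ : G ∈ F ε ζ and (ε,ζ) ∉ C_ξ} < κ}`; and at limits
`C_λ = ⋃_{ξ<λ} C_ξ`. -/
noncomputable def closIter {K : Type u} (α : Ordinal.{u}) (F : Ordinal.{u} → K → Filter K)
    (C : Set (Ordinal.{u} × K)) : Ordinal.{u} → Set (Ordinal.{u} × K) := fun ξ =>
  Ordinal.limitRecOn ξ C
    (fun _ Cp => Cp ∪ {p : Ordinal.{u} × K | ∃ ε : Ordinal.{u}, p.1 < ε ∧ ε < α ∧
        ∃ G ∈ F p.1 p.2, #{ζ : K | G ∈ F ε ζ ∧ (ε, ζ) ∉ Cp} < #K})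
    (fun o _ ih => ⋃ (ξ' : Ordinal.{u}) (h : ξ' < o), ih ξ' h)

/-!
By induction on `ξ`, every point of `C_ξ` has, for each `G` in its filter and each higher
level `γ < α`, `κ` many successors `(γ, ζ)` in the final stage with `G ∈ F γ ζ`. For the
points of `C` this is condition (ii) applied to `X ∩ G`. A point `(β, η)` entering at stage
`ξ + 1` through a level `ε` and a set `H` has, by (ii) applied to `G ∩ H`, `κ` many `ζ` with
`G ∩ H ∈ F ε ζ`, fewer than `κ` of which lie outside `C_ξ`. If `γ = ε` these are the
successors; if `ε < γ`, one of them is a point of `C_ξ` below `γ` to which the induction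
hypothesis applies; if `γ < ε`, every `(γ, ζ)` with `G ∩ H ∈ F γ ζ` enters at stage `ξ + 1`
through the same `ε` and `H`.
-/

section Cardinality

variable {K : Type u} {A B S : Set K}

lemma mk_eq_mk_of_superset (hAB : A ⊆ B) (hA : #A = #K) : #B = #K :=
  le_antisymm (mk_set_le B) (hA ▸ mk_le_mk_of_subset hAB)

lemma mk_diff_eq_mk_of_mk_lt (hK : ℵ₀ ≤ #K) (hA : #A = #K) (hS : #S < #K) :
    #(A \ S : Set K) = #K :=
  le_antisymm (mk_set_le _) <| not_lt.1 fun h =>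
    (hA ▸ le_mk_sdiff_add_mk A S).not_gt (add_lt_of_lt hK h hS)

end Cardinality

section Closure

variable {K : Type u} {α : Ordinal.{u}} {F : Ordinal.{u} → K → Filter K}

/-- Condition (ii) of a stratified set of filters. -/
def HasLargeUpperFibers (α : Ordinal.{u}) (F : Ordinal.{u} → K → Filter K) : Prop :=
  ∀ β δ : Ordinal.{u}, β < δ → δ < α → ∀ η : K, ∀ G ∈ F β η, #{ζ : K | G ∈ F δ ζ} = #K

lemma IsStratified.hasLargeUpperFibers (hF : IsStratified α F) : HasLargeUpperFibers α F :=
  hF.2.2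

def HasManySuccessorsIn (α : Ordinal.{u}) (F : Ordinal.{u} → K → Filter K)
    (E : Set (Ordinal.{u} × K)) (p : Ordinal.{u} × K) : Prop :=
  ∀ G ∈ F p.1 p.2, ∀ γ : Ordinal.{u}, p.1 < γ → γ < α →
    #{ζ : K | (γ, ζ) ∈ E ∧ G ∈ F γ ζ} = #K

lemma HasManySuccessorsIn.mono {E E' : Set (Ordinal.{u} × K)} {p : Ordinal.{u} × K}
    (h : HasManySuccessorsIn α F E p) (hEE' : E ⊆ E') : HasManySuccessorsIn α F E' p :=
  fun G hG γ hpγ hγα =>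
    mk_eq_mk_of_superset (fun _ hζ => ⟨hEE' hζ.1, hζ.2⟩) (h G hG γ hpγ hγα)

def closStep (α : Ordinal.{u}) (F : Ordinal.{u} → K → Filter K)
    (D : Set (Ordinal.{u} × K)) : Set (Ordinal.{u} × K) :=
  D ∪ {p | ∃ ε : Ordinal.{u}, p.1 < ε ∧ ε < α ∧
    ∃ G ∈ F p.1 p.2, #{ζ : K | G ∈ F ε ζ ∧ (ε, ζ) ∉ D} < #K}

variable (α F) (C : Set (Ordinal.{u} × K))

lemma closIter_zero : closIter α F C 0 = C :=
  Ordinal.limitRecOn_zero _ _ _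

lemma closIter_add_one (ξ : Ordinal.{u}) :
    closIter α F C (ξ + 1) = closStep α F (closIter α F C ξ) :=
  Ordinal.limitRecOn_add_one _ _ _ _

lemma closIter_limit {ξ : Ordinal.{u}} (h : Order.IsSuccLimit ξ) :
    closIter α F C ξ = ⋃ (ξ' : Ordinal.{u}) (_ : ξ' < ξ), closIter α F C ξ' :=
  Ordinal.limitRecOn_limit _ _ _ _ h

lemma closIter_monotone : Monotone (closIter α F C) := by
  intro ξ ξ' hle
  induction ξ' using Ordinal.limitRecOn with
  | zero => rw [nonpos_iff_eq_zero.1 hle]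
  | add_one o IH =>
    rcases hle.eq_or_lt with rfl | hlt
    · exact subset_rfl
    rw [closIter_add_one]
    exact (IH (Order.lt_add_one_iff.1 hlt)).trans subset_union_left
  | limit o hlim _ =>
    rcases hle.eq_or_lt with rfl | hlt
    · exact subset_rfl
    rw [closIter_limit α F C hlim]
    exact subset_iUnion₂_of_subset ξ hlt subset_rfl

variable {α F C}

lemma hasManySuccessorsIn_of_mem_setOf (hup : HasLargeUpperFibers α F) {X : Set K}
    {p : Ordinal.{u} × K} (hp : p ∈ {p : Ordinal.{u} × K | p.1 < α ∧ X ∈ F p.1 p.2}) :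
    HasManySuccessorsIn α F {p : Ordinal.{u} × K | p.1 < α ∧ X ∈ F p.1 p.2} p :=
  fun _ hG γ hpγ hγα =>
    mk_eq_mk_of_superset
      (fun _ hζ => ⟨⟨hγα, Filter.mem_of_superset hζ inter_subset_left⟩,
        Filter.mem_of_superset hζ inter_subset_right⟩)
      (hup _ γ hpγ hγα _ _ (Filter.inter_mem hp.2 hG))

lemma mk_setOf_mem_and_mem_eq_of_mk_lt (hK : ℵ₀ ≤ #K) (hup : HasLargeUpperFibers α F)
    {D : Set (Ordinal.{u} × K)} {β ε : Ordinal.{u}} {η : K} {G H : Set K}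
    (hβε : β < ε) (hεα : ε < α) (hG : G ∈ F β η) (hH : H ∈ F β η)
    (hsmall : #{ζ : K | H ∈ F ε ζ ∧ (ε, ζ) ∉ D} < #K) :
    #{ζ : K | (ε, ζ) ∈ D ∧ G ∈ F ε ζ} = #K := by
  refine mk_eq_mk_of_superset ?_ <|
    mk_diff_eq_mk_of_mk_lt hK (hup β ε hβε hεα η _ (Filter.inter_mem hG hH)) hsmall
  rintro ζ ⟨hGH, hout⟩
  have hHζ : H ∈ F ε ζ := Filter.mem_of_superset hGH inter_subset_right
  exact ⟨not_not.1 fun hD => hout ⟨hHζ, hD⟩, Filter.mem_of_superset hGH inter_subset_left⟩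

lemma hasManySuccessorsIn_of_mem_closStep (hK : ℵ₀ ≤ #K) (hup : HasLargeUpperFibers α F)
    {D E : Set (Ordinal.{u} × K)} (hDE : D ⊆ E) (hstepE : closStep α F D ⊆ E)
    (hD : ∀ p ∈ D, HasManySuccessorsIn α F E p) :
    ∀ p ∈ closStep α F D, HasManySuccessorsIn α F E p := by
  rintro ⟨β, η⟩ (hp | ⟨ε, hβε, hεα, H, hH, hsmall⟩) G hG γ hβγ hγα
  · exact hD _ hp G hG γ hβγ hγα
  have hmany := mk_setOf_mem_and_mem_eq_of_mk_lt hK hup hβε hεα hG hH hsmall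
  rcases lt_trichotomy ε γ with hεγ | rfl | hγε
  · obtain ⟨ζ, hζD, hGζ⟩ : {ζ : K | (ε, ζ) ∈ D ∧ G ∈ F ε ζ}.Nonempty := by
      rw [← nonempty_coe_sort, ← mk_ne_zero_iff, hmany]
      exact (aleph0_pos.trans_le hK).ne'
    exact hD _ hζD G hGζ γ hεγ hγα
  · exact mk_eq_mk_of_superset (fun _ hζ => ⟨hDE hζ.1, hζ.2⟩) hmany
  · refine mk_eq_mk_of_superset (fun ζ hζ => ⟨hstepE (Or.inr ?_), ?_⟩)
      (hup β γ hβγ hγα η _ (Filter.inter_mem hG hH))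
    · exact ⟨ε, hγε, hεα, H, Filter.mem_of_superset hζ inter_subset_right, hsmall⟩
    · exact Filter.mem_of_superset hζ inter_subset_left

lemma hasManySuccessorsIn_closIter (hK : ℵ₀ ≤ #K) (hup : HasLargeUpperFibers α F)
    (hC : ∀ p ∈ C, HasManySuccessorsIn α F C p) {ξ Λ : Ordinal.{u}} (hξΛ : ξ ≤ Λ) :
    ∀ p ∈ closIter α F C ξ, HasManySuccessorsIn α F (closIter α F C Λ) p := by
  induction ξ using Ordinal.limitRecOn with
  | zero =>
    intro p hp
    rw [closIter_zero] at hp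
    exact (hC p hp).mono ((closIter_zero α F C).superset.trans (closIter_monotone α F C hξΛ))
  | add_one o IH =>
    have hoΛ : o ≤ Λ := le_self_add.trans hξΛ
    rw [closIter_add_one]
    refine hasManySuccessorsIn_of_mem_closStep hK hup (closIter_monotone α F C hoΛ) ?_ (IH hoΛ)
    exact (closIter_add_one α F C o).superset.trans (closIter_monotone α F C hξΛ)
  | limit o hlim IH =>
    rw [closIter_limit α F C hlim]
    simp only [mem_iUnion]
    rintro p ⟨ξ', hξ', hp⟩
    exact IH ξ' hξ' (hξ'.le.trans hξΛ) p hp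

end Closure

/-- Let `C = {(β,η) ∈ α × κ : X ∈ F β η}` and let `cl(C) = C_{κ⁺}` be its closure.
If `(β,η) ∈ cl(C)` then for every `G ∈ F β η` and every `γ` with `β < γ < α`, the set
`{ζ < κ : (γ,ζ) ∈ cl(C) and G ∈ F γ ζ}` has cardinality `κ`. -/
theorem mem_closure_many_successors_in_closure {K : Type u} (hK : aleph0 ≤ #K)
    (α : Ordinal.{u}) (F : Ordinal.{u} → K → Filter K) (hF : IsStratified α F)
    (X : Set K)
    (β : Ordinal.{u}) (η : K)
    (hmem : (β, η) ∈ closIter α F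
      {p : Ordinal.{u} × K | p.1 < α ∧ X ∈ F p.1 p.2} (Order.succ (#K)).ord)
    (G : Set K) (hG : G ∈ F β η)
    (γ : Ordinal.{u}) (hβγ : β < γ) (hγα : γ < α) :
    #{ζ : K | (γ, ζ) ∈ closIter α F
        {p : Ordinal.{u} × K | p.1 < α ∧ X ∈ F p.1 p.2} (Order.succ (#K)).ord ∧
      G ∈ F γ ζ} = #K :=
  hasManySuccessorsIn_closIter hK hF.hasLargeUpperFibers
    (fun _ hp => hasManySuccessorsIn_of_mem_setOf hF.hasLargeUpperFibers hp) le_rfl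
    (β, η) hmem G hG γ hβγ hγα
end
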